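/- arXiv:2410.22219 — 2 statements merged into one kernel-verified Lean document; each statement's English description precedes it below -/
import Mathlib

section
/- For every M > 0 and k > 0, the kernel of D_φF(M; k, ω₀) = (3kM - ω₀)∂_θ + (ω₀k² - k³M)∂_θ³ on 1-periodic L² functions is exactly span{1, e^{2πiθ}, e^{-2πiθ}}, where ω₀ = (3kM + 4k³Mπ²)/(1 + 4k²π²); i.e., no Fourier mode e^{2πinθ} with |n| ≥ 2 lies in the kernel. -/
open Real

/-- The linear dispersion relation for CH Stokes waves. -/
noncomputable def ω₀ (k M : ℝ) : ℝ := (3 * k * M + 4 * k ^ 3 * M * π ^ 2) / (1 + 4 * k ^ 2 * π ^ 2)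

namespace Stmt17Aux

lemma deriv_eq_of_hasDerivAt {f g : ℝ → ℂ} (h : ∀ t, HasDerivAt f (g t) t) :
    deriv f = g := funext fun t => (h t).deriv

lemma hasDerivAt_expc (c : ℂ) (t : ℝ) :
    HasDerivAt (fun s : ℝ => Complex.exp (c * s)) (c * Complex.exp (c * t)) t := by
  have h1 : HasDerivAt (fun s : ℝ => (s : ℂ) * c) ((1:ℝ) • c) t := by
    simpa [Complex.real_smul] using (hasDerivAt_id t).smul_const c
  have h2 : HasDerivAt (fun s : ℝ => c * (s : ℂ)) c t := by
    simpa [mul_comm] using h1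
  simpa [mul_comm] using h2.cexp

lemma hasDerivAt_expc' (c : ℂ) (t : ℝ) :
    HasDerivAt (fun s : ℝ => Complex.exp (-(c * s))) (-c * Complex.exp (-(c * t))) t := by
  simpa [neg_mul] using hasDerivAt_expc (-c) t

lemma const_of_hasDerivAt_zero {f : ℝ → ℂ} (h : ∀ t, HasDerivAt f 0 t) (x : ℝ) :
    f x = f 0 :=
  is_const_of_deriv_eq_zero (fun t => (h t).differentiableAt)
    (fun t => (h t).deriv) x 0

end Stmt17Aux

open Stmt17Aux in
/-- For every `M, k > 0`, the kernel of `D_φF(M;k,ω₀) = (3kM-ω₀)∂_θ + (ω₀k²-k³M)∂_θ³` on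
smooth 1-periodic functions is exactly `span{1, e^{2πiθ}, e^{-2πiθ}}`. -/
theorem stmt17 (k M : ℝ) (hk : 0 < k) (hM : 0 < M) :
    (∀ f : ℝ → ℂ, ContDiff ℝ (⊤ : ℕ∞) f → Function.Periodic f 1 →
        (∀ θ : ℝ, ((3 * k * M - ω₀ k M : ℝ) : ℂ) * deriv f θ
            + ((ω₀ k M * k ^ 2 - k ^ 3 * M : ℝ) : ℂ) * deriv (deriv (deriv f)) θ = 0) →
        ∃ c₀ c₁ c₂ : ℂ, ∀ θ : ℝ,
          f θ = c₀ + c₁ * Complex.exp (2 * (π : ℂ) * Complex.I * (θ : ℂ))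
            + c₂ * Complex.exp (-(2 * (π : ℂ) * Complex.I * (θ : ℂ)))) ∧
      ∀ c₀ c₁ c₂ : ℂ, ∀ θ : ℝ,
        ((3 * k * M - ω₀ k M : ℝ) : ℂ)
            * deriv (fun t : ℝ => c₀ + c₁ * Complex.exp (2 * (π : ℂ) * Complex.I * (t : ℂ))
                + c₂ * Complex.exp (-(2 * (π : ℂ) * Complex.I * (t : ℂ)))) θ
          + ((ω₀ k M * k ^ 2 - k ^ 3 * M : ℝ) : ℂ)
            * deriv (deriv (deriv
                (fun t : ℝ => c₀ + c₁ * Complex.exp (2 * (π : ℂ) * Complex.I * (t : ℂ))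
                  + c₂ * Complex.exp (-(2 * (π : ℂ) * Complex.I * (t : ℂ)))))) θ = 0 := by
  have hπ : (0:ℝ) < π := Real.pi_pos
  have hD : (0:ℝ) < 1 + 4 * k ^ 2 * π ^ 2 := by positivity
  have hbR : (ω₀ k M * k ^ 2 - k ^ 3 * M : ℝ) = 2 * k ^ 3 * M / (1 + 4 * k ^ 2 * π ^ 2) := by
    unfold ω₀; field_simp; ring
  have hbpos : (0:ℝ) < ω₀ k M * k ^ 2 - k ^ 3 * M := by
    rw [hbR]; positivity
  have haR : (3 * k * M - ω₀ k M : ℝ) = 4 * π ^ 2 * (ω₀ k M * k ^ 2 - k ^ 3 * M) := by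
    unfold ω₀; field_simp; ring
  set a : ℂ := ((3 * k * M - ω₀ k M : ℝ) : ℂ) with ha_def
  set b : ℂ := ((ω₀ k M * k ^ 2 - k ^ 3 * M : ℝ) : ℂ) with hb_def
  have hb0 : b ≠ 0 := by
    simp only [hb_def, Ne, Complex.ofReal_eq_zero]
    exact ne_of_gt hbpos
  have hab : a = 4 * (π:ℂ) ^ 2 * b := by
    rw [ha_def, hb_def, haR]; push_cast; ring
  have hπC : (4 * (π:ℂ) ^ 2) ≠ 0 :=
    mul_ne_zero (by norm_num) (pow_ne_zero _ (Complex.ofReal_ne_zero.mpr Real.pi_ne_zero))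
  set ω : ℂ := 2 * (π:ℂ) * Complex.I with hω_def
  have hω2 : ω ^ 2 = -(4 * (π:ℂ) ^ 2) := by
    rw [hω_def, mul_pow, mul_pow, Complex.I_sq]; ring
  have hω0 : ω ≠ 0 := by
    rw [hω_def]
    exact mul_ne_zero
      (mul_ne_zero two_ne_zero (Complex.ofReal_ne_zero.mpr Real.pi_ne_zero)) Complex.I_ne_zero
  constructor
  · -- forward direction
    intro f hf _hper hode
    have hf' : ContDiff ℝ ((⊤:ℕ∞) : WithTop ℕ∞) f := hf.of_le (mod_cast le_top)
    have hf1 : ContDiff ℝ ((⊤:ℕ∞) : WithTop ℕ∞) (deriv f) := (contDiff_infty_iff_deriv.mp hf').2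
    have hf2 : ContDiff ℝ ((⊤:ℕ∞) : WithTop ℕ∞) (deriv (deriv f)) :=
      (contDiff_infty_iff_deriv.mp hf1).2
    have h1le : ((1:ℕ) : WithTop ℕ∞) ≤ ((⊤:ℕ∞) : WithTop ℕ∞) := by exact_mod_cast le_top
    have hdf : ∀ t, HasDerivAt f (deriv f t) t :=
      fun t => ((hf'.differentiable (by simp)) t).hasDerivAt
    have hdf1 : ∀ t, HasDerivAt (deriv f) (deriv (deriv f) t) t :=
      fun t => ((hf1.differentiable (by simp)) t).hasDerivAt
    have hdf2 : ∀ t, HasDerivAt (deriv (deriv f)) (deriv (deriv (deriv f)) t) t :=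
      fun t => ((hf2.differentiable (by simp)) t).hasDerivAt
    -- the ODE reduces to f''' = -4π² f'
    have hode' : ∀ θ, deriv (deriv (deriv f)) θ = -(4 * (π:ℂ) ^ 2) * deriv f θ := by
      intro θ
      have h2 : b * (deriv (deriv (deriv f)) θ + 4 * (π:ℂ) ^ 2 * deriv f θ) = 0 := by
        linear_combination hode θ - deriv f θ * hab
      have h3 := (mul_eq_zero.mp h2).resolve_left hb0
      linear_combination h3
    -- g := f'' + 4π² f is constant, value C
    have hdg : ∀ t, HasDerivAt (fun θ => deriv (deriv f) θ + 4 * (π:ℂ) ^ 2 * f θ) 0 t := by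
      intro t
      have h := (hdf2 t).add ((hdf t).const_mul (4 * (π:ℂ) ^ 2))
      refine h.congr_deriv (Eq.symm ?_)
      rw [hode' t]; ring
    obtain ⟨C, hC⟩ : ∃ C : ℂ, ∀ t, deriv (deriv f) t + 4 * (π:ℂ) ^ 2 * f t = C :=
      ⟨_, fun t => const_of_hasDerivAt_zero hdg t⟩
    have hhe : ∀ t, deriv (deriv f) t = -(4 * (π:ℂ) ^ 2) * f t + C := by
      intro t; linear_combination hC t
    obtain ⟨c, hc⟩ : ∃ c : ℂ, 4 * (π:ℂ) ^ 2 * c = C :=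
      ⟨C * (4 * (π:ℂ) ^ 2)⁻¹, by rw [mul_comm C, ← mul_assoc, mul_inv_cancel₀ hπC, one_mul]⟩
    -- p := f' - ωf + ωc;  (p·e^{ωθ})' = 0
    have hdp : ∀ t, HasDerivAt
        (fun θ : ℝ => (deriv f θ - ω * f θ + ω * c) * Complex.exp (ω * θ)) 0 t := by
      intro t
      have hin : HasDerivAt (fun θ : ℝ => deriv f θ - ω * f θ + ω * c)
          (deriv (deriv f) t - ω * deriv f t) t :=
        ((hdf1 t).sub ((hdf t).const_mul ω)).add_const _
      have h := hin.mul (hasDerivAt_expc ω t)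
      refine h.congr_deriv (Eq.symm ?_)
      rw [hhe t]
      linear_combination Complex.exp (ω * (t:ℂ)) * (f t - c) * hω2 + Complex.exp (ω * (t:ℂ)) * hc
    -- q := f' + ωf - ωc;  (q·e^{-ωθ})' = 0
    have hdq : ∀ t, HasDerivAt
        (fun θ : ℝ => (deriv f θ + ω * f θ - ω * c) * Complex.exp (-(ω * θ))) 0 t := by
      intro t
      have hin : HasDerivAt (fun θ : ℝ => deriv f θ + ω * f θ - ω * c)
          (deriv (deriv f) t + ω * deriv f t) t :=
        ((hdf1 t).add ((hdf t).const_mul ω)).sub_const _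
      have h := hin.mul (hasDerivAt_expc' ω t)
      refine h.congr_deriv (Eq.symm ?_)
      rw [hhe t]
      linear_combination Complex.exp (-(ω * (t:ℂ))) * (f t - c) * hω2
        + Complex.exp (-(ω * (t:ℂ))) * hc
    obtain ⟨A, hA⟩ : ∃ A : ℂ, ∀ θ : ℝ,
        (deriv f θ - ω * f θ + ω * c) * Complex.exp (ω * θ) = A :=
      ⟨_, fun θ => const_of_hasDerivAt_zero hdp θ⟩
    obtain ⟨B, hB⟩ : ∃ B : ℂ, ∀ θ : ℝ,
        (deriv f θ + ω * f θ - ω * c) * Complex.exp (-(ω * θ)) = B :=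
      ⟨_, fun θ => const_of_hasDerivAt_zero hdq θ⟩
    have h2ω : (2 * ω) * (2 * ω)⁻¹ = 1 := mul_inv_cancel₀ (mul_ne_zero two_ne_zero hω0)
    refine ⟨c, B * (2 * ω)⁻¹, -(A * (2 * ω)⁻¹), fun θ => ?_⟩
    have hexp : Complex.exp (ω * θ) * Complex.exp (-(ω * θ)) = 1 := by
      rw [← Complex.exp_add]; simp
    have e1 : deriv f θ - ω * f θ + ω * c = A * Complex.exp (-(ω * θ)) := by
      linear_combination Complex.exp (-(ω * (θ:ℂ))) * hA θ
        - (deriv f θ - ω * f θ + ω * c) * hexp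
    have e2 : deriv f θ + ω * f θ - ω * c = B * Complex.exp (ω * θ) := by
      linear_combination Complex.exp (ω * (θ:ℂ)) * hB θ
        - (deriv f θ + ω * f θ - ω * c) * hexp
    linear_combination (2 * ω)⁻¹ * e2 - (2 * ω)⁻¹ * e1 - (f θ - c) * h2ω
  · -- explicit functions are in the kernel
    intro c₀ c₁ c₂ θ
    set F : ℝ → ℂ := fun t : ℝ => c₀ + c₁ * Complex.exp (ω * (t:ℂ))
        + c₂ * Complex.exp (-(ω * (t:ℂ))) with hF_def
    have d1 : deriv F = fun t : ℝ =>
        c₁ * ω * Complex.exp (ω * t) + c₂ * (-ω) * Complex.exp (-(ω * t)) := by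
      apply deriv_eq_of_hasDerivAt
      intro t
      have h := ((hasDerivAt_const t c₀).add ((hasDerivAt_expc ω t).const_mul c₁)).add
        ((hasDerivAt_expc' ω t).const_mul c₂)
      refine h.congr_deriv (Eq.symm ?_)
      ring
    have d2 : deriv (deriv F) = fun t : ℝ =>
        c₁ * ω ^ 2 * Complex.exp (ω * t) + c₂ * ω ^ 2 * Complex.exp (-(ω * t)) := by
      rw [d1]
      apply deriv_eq_of_hasDerivAt
      intro t
      have h := ((hasDerivAt_expc ω t).const_mul (c₁ * ω)).add
        ((hasDerivAt_expc' ω t).const_mul (c₂ * (-ω)))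
      refine h.congr_deriv (Eq.symm ?_)
      ring
    have d3 : deriv (deriv (deriv F)) = fun t : ℝ =>
        c₁ * ω ^ 3 * Complex.exp (ω * t) + c₂ * (-(ω ^ 3)) * Complex.exp (-(ω * t)) := by
      rw [d2]
      apply deriv_eq_of_hasDerivAt
      intro t
      have h := ((hasDerivAt_expc ω t).const_mul (c₁ * ω ^ 2)).add
        ((hasDerivAt_expc' ω t).const_mul (c₂ * ω ^ 2))
      refine h.congr_deriv (Eq.symm ?_)
      ring
    show a * deriv F θ + b * deriv (deriv (deriv F)) θ = 0
    simp only [d3]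
    simp only [d1]
    rw [hab]
    linear_combination (b * c₁ * ω * Complex.exp (ω * (θ:ℂ))
      - b * c₂ * ω * Complex.exp (-(ω * (θ:ℂ)))) * hω2
end

section
/- With ω₀(k,M) = (3kM + 4k³Mπ²)/(1 + 4k²π²) and ψ₂(θ) = ((1 + 4k²π²)²/(32k²Mπ²))cos(4πθ), the function ψ₂ solves the linear equation (3kM - ω₀)ψ₂' + (ω₀k² - k³M)ψ₂''' = 3πk(1 + 4k²π²)sin(4πθ), and satisfies ∫₀¹ ψ₂ dθ = 0 and ∫₀¹ ψ₂(θ)cos(2πθ) dθ = 0. -/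
open Real

/-- The second-order Stokes correction `ψ₂`. -/
noncomputable def ψ₂ (k M : ℝ) : ℝ → ℝ :=
  fun θ => ((1 + 4 * k ^ 2 * π ^ 2) ^ 2 / (32 * k ^ 2 * M * π ^ 2)) * Real.cos (4 * π * θ)

lemma dcos (c a : ℝ) : deriv (fun θ => c * Real.cos (a * θ)) = fun θ => -(c * a) * Real.sin (a * θ) := by
  funext θ
  have h1 : HasDerivAt (fun θ : ℝ => a * θ) a θ := by
    simpa using (hasDerivAt_id θ).const_mul a
  have h := ((Real.hasDerivAt_cos (a * θ)).comp θ h1).const_mul c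
  have : HasDerivAt (fun θ : ℝ => c * Real.cos (a * θ)) (-(c * a) * Real.sin (a * θ)) θ := by
    exact h.congr_deriv (by ring)
  exact this.deriv

lemma dsin (c a : ℝ) : deriv (fun θ => c * Real.sin (a * θ)) = fun θ => c * a * Real.cos (a * θ) := by
  funext θ
  have h1 : HasDerivAt (fun θ : ℝ => a * θ) a θ := by
    simpa using (hasDerivAt_id θ).const_mul a
  have h := ((Real.hasDerivAt_sin (a * θ)).comp θ h1).const_mul c
  have : HasDerivAt (fun θ : ℝ => c * Real.sin (a * θ)) (c * a * Real.cos (a * θ)) θ := by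
    exact h.congr_deriv (by ring)
  exact this.deriv

lemma integral_cos_mul (a : ℝ) (ha : a ≠ 0) :
    (∫ θ in (0:ℝ)..1, Real.cos (a * θ)) = Real.sin a / a := by
  have h : ∀ θ ∈ Set.uIcc (0:ℝ) 1, HasDerivAt (fun x => Real.sin (a * x) / a) (Real.cos (a * θ)) θ := by
    intro θ _
    have h1 : HasDerivAt (fun θ : ℝ => a * θ) a θ := by
      simpa using (hasDerivAt_id θ).const_mul a
    have := ((Real.hasDerivAt_sin (a * θ)).comp θ h1).div_const a
    exact this.congr_deriv (by field_simp)
  rw [intervalIntegral.integral_eq_sub_of_hasDerivAt h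
    ((Real.continuous_cos.comp (continuous_const.mul continuous_id)).intervalIntegrable 0 1)]
  simp

lemma sin_4pi : Real.sin (4 * π) = 0 := by
  have := Real.sin_nat_mul_pi 4
  push_cast at this
  simpa using this

lemma sin_6pi : Real.sin (6 * π) = 0 := by
  have := Real.sin_nat_mul_pi 6
  push_cast at this
  simpa using this

lemma sin_2pi : Real.sin (2 * π) = 0 := Real.sin_two_pi

/-- `ψ₂` solves `(3kM-ω₀)ψ₂' + (ω₀k²-k³M)ψ₂''' = 3πk(1+4k²π²)sin(4πθ)` and is orthogonal
to `1` and `cos(2πθ)` over one period. -/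
theorem stmt18 (k M : ℝ) (hk : 0 < k) (hM : 0 < M) :
    (∀ θ : ℝ, (3 * k * M - ω₀ k M) * deriv (ψ₂ k M) θ
          + (ω₀ k M * k ^ 2 - k ^ 3 * M) * deriv (deriv (deriv (ψ₂ k M))) θ
        = 3 * π * k * (1 + 4 * k ^ 2 * π ^ 2) * Real.sin (4 * π * θ)) ∧
      (∫ θ in (0 : ℝ)..1, ψ₂ k M θ) = 0 ∧
      (∫ θ in (0 : ℝ)..1, ψ₂ k M θ * Real.cos (2 * π * θ)) = 0 := by
  have hπ := Real.pi_pos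
  set c : ℝ := (1 + 4 * k ^ 2 * π ^ 2) ^ 2 / (32 * k ^ 2 * M * π ^ 2) with hc
  have hψ : ψ₂ k M = fun θ => c * Real.cos (4 * π * θ) := rfl
  have hD : (0:ℝ) < 1 + 4 * k ^ 2 * π ^ 2 := by positivity
  refine ⟨?_, ?_, ?_⟩
  · intro θ
    rw [hψ, dcos c (4 * π), dsin (-(c * (4*π))) (4*π), dcos (-(c * (4*π)) * (4*π)) (4*π)]
    rw [ω₀, hc]
    field_simp
    ring
  · rw [hψ, intervalIntegral.integral_const_mul, integral_cos_mul (4*π) (by positivity), sin_4pi]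
    simp
  · rw [hψ]
    have heq : ∀ θ : ℝ, c * Real.cos (4 * π * θ) * Real.cos (2 * π * θ)
        = (c/2) * Real.cos (2 * π * θ) + (c/2) * Real.cos (6 * π * θ) := by
      intro θ
      have e1 : Real.cos (6 * π * θ) = Real.cos (4 * π * θ) * Real.cos (2 * π * θ)
          - Real.sin (4 * π * θ) * Real.sin (2 * π * θ) := by
        rw [show (6:ℝ) * π * θ = 4 * π * θ + 2 * π * θ from by ring, Real.cos_add]
      have e2 := Real.cos_sub (4 * π * θ) (2 * π * θ)
      rw [show (4:ℝ) * π * θ - 2 * π * θ = 2 * π * θ from by ring] at e2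
      linear_combination (-(c/2)) * e1 + (-(c/2)) * e2
    simp only [heq]
    rw [intervalIntegral.integral_add ((by fun_prop : Continuous fun θ:ℝ => c/2 * Real.cos (2*π*θ)).intervalIntegrable 0 1) ((by fun_prop : Continuous fun θ:ℝ => c/2 * Real.cos (6*π*θ)).intervalIntegrable 0 1),
      intervalIntegral.integral_const_mul, intervalIntegral.integral_const_mul,
      integral_cos_mul (2*π) (by positivity), integral_cos_mul (6*π) (by positivity),
      sin_2pi, sin_6pi]
    simp
end
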